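/- The hypercube graph Q_n (n ≥ 1) has constant resistance curvature K, where κ_i = K for all vertices solves Ω κ = 1 and K satisfies 1/K = Σ_{k=1}^{n} (1/k)·C(n,k), with C(n,k) the binomial coefficient. -/

import Mathlib

open Finset SimpleGraph Matrix

/-- The resistance matrix of a graph: `Ω i j = Γ⁻¹ i i + Γ⁻¹ j j - 2 Γ⁻¹ i j`
where `Γ = L + (1/N) J` with `L` the Laplacian and `J` the all-ones matrix. -/
noncomputable def resistanceMatrix {V : Type*} [Fintype V] [DecidableEq V]
    (G : SimpleGraph V) [DecidableRel G.Adj] : Matrix V V ℝ :=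
  Matrix.of fun i j =>
    letI Γinv := (G.lapMatrix ℝ + Matrix.of fun _ _ => (1 : ℝ) / Fintype.card V)⁻¹
    Γinv i i + Γinv j j - 2 * Γinv i j

/-- The hypercube graph `Q n`: vertices are `{0,1}ⁿ`, with edges between vertices at
Hamming distance `1`. -/
def hypercubeGraph (n : ℕ) : SimpleGraph (Fin n → ZMod 2) where
  Adj x y := hammingDist x y = 1
  symm := ⟨fun x y h => (hammingDist_comm y x).trans h⟩
  loopless := ⟨fun x h => by simp [hammingDist_self] at h⟩

instance (n : ℕ) : DecidableRel (hypercubeGraph n).Adj :=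
  fun x y => inferInstanceAs (Decidable (hammingDist x y = 1))

/-! The characters `χ_S x = (-1) ^ ⟨S, x⟩` of `(ZMod 2)ⁿ` form an orthogonal eigenbasis of
`Γ = L + J / N`: the Laplacian acts on `χ_S` by `2 |S|`, and `J / N` kills every character
except `χ_0 = 1`. Inverting `Γ` on this basis shows that `Γ⁻¹` has constant diagonal
`N⁻¹ ∑_S λ_S⁻¹`; since moreover `Γ 1 = 1`, the rows of `Γ⁻¹` sum to `1`. Hence every row of `Ω`
sums to `2 ∑_S λ_S⁻¹ - 2 = ∑_{k ≥ 1} C(n, k) / k`, and the constant vector with the reciprocal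
value solves `Ω κ = 1`. -/

namespace SimpleGraph

variable {V : Type*} [Fintype V] [DecidableEq V] (G : SimpleGraph V) [DecidableRel G.Adj]

noncomputable def augmentedLapMatrix : Matrix V V ℝ :=
  G.lapMatrix ℝ + of fun _ _ => (1 : ℝ) / Fintype.card V

lemma resistanceMatrix_apply (i j : V) :
    resistanceMatrix G i j = G.augmentedLapMatrix⁻¹ i i + G.augmentedLapMatrix⁻¹ j j -
      2 * G.augmentedLapMatrix⁻¹ i j :=
  rfl

lemma augmentedLapMatrix_mulVec_const : G.augmentedLapMatrix *ᵥ (fun _ => 1) = fun _ => 1 := by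
  ext i
  have : Nonempty V := ⟨i⟩
  have hN : (Fintype.card V : ℝ) ≠ 0 := Nat.cast_ne_zero.mpr Fintype.card_ne_zero
  rw [augmentedLapMatrix, add_mulVec, lapMatrix_mulVec_const_eq_zero, zero_add]
  simp [mulVec, dotProduct, hN]

lemma inv_augmentedLapMatrix_mulVec_const (h : IsUnit G.augmentedLapMatrix.det) :
    G.augmentedLapMatrix⁻¹ *ᵥ (fun _ => 1) = fun _ => 1 := by
  conv_lhs => rw [← G.augmentedLapMatrix_mulVec_const]
  rw [mulVec_mulVec, nonsing_inv_mul _ h, one_mulVec]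

theorem resistanceMatrix_mulVec_const (h : IsUnit G.augmentedLapMatrix.det) {d : ℝ}
    (hd : ∀ i, G.augmentedLapMatrix⁻¹ i i = d) (K : ℝ) :
    resistanceMatrix G *ᵥ (fun _ => K) = fun _ => K * (2 * Fintype.card V * d - 2) := by
  ext i
  have hrow : ∑ j, G.augmentedLapMatrix⁻¹ i j = 1 := by
    simpa [mulVec, dotProduct] using congrFun (G.inv_augmentedLapMatrix_mulVec_const h) i
  simp only [mulVec, dotProduct, resistanceMatrix_apply, hd, ← Finset.sum_mul,
    Finset.sum_sub_distrib, ← Finset.mul_sum, hrow, Finset.sum_const, Finset.card_univ,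
    nsmul_eq_mul]
  ring

end SimpleGraph

namespace Matrix

variable {V ι K : Type*} [Fintype V] [DecidableEq V] [Fintype ι] [Field K]

theorem mul_smul_sum_inv_smul_vecMulVec_eq_one {A : Matrix V V K} {v : ι → V → K}
    {μ : ι → K} (hAv : ∀ s, A *ᵥ v s = μ s • v s) (hμ : ∀ s, μ s ≠ 0) {c : K} (hc : c ≠ 0)
    (hv : ∑ s, vecMulVec (v s) (v s) = c • 1) :
    A * (c⁻¹ • ∑ s, (μ s)⁻¹ • vecMulVec (v s) (v s)) = 1 := by
  have heig (s) : A * ((μ s)⁻¹ • vecMulVec (v s) (v s)) = vecMulVec (v s) (v s) := by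
    rw [Matrix.mul_smul, mul_vecMulVec, hAv, smul_vecMulVec, smul_smul, inv_mul_cancel₀ (hμ s),
      one_smul]
  rw [Matrix.mul_smul, Finset.mul_sum, Finset.sum_congr rfl fun s _ => heig s, hv, smul_smul,
    inv_mul_cancel₀ hc, one_smul]

end Matrix

namespace Hypercube

noncomputable def sign (z : ZMod 2) : ℝ := if z = 0 then 1 else -1

lemma eq_zero_or_eq_one (a : ZMod 2) : a = 0 ∨ a = 1 := by
  decide +revert

lemma sign_add (a b : ZMod 2) : sign (a + b) = sign a * sign b := by
  rcases eq_zero_or_eq_one a with rfl | rfl <;> rcases eq_zero_or_eq_one b with rfl | rfl <;>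
    simp +decide [sign]

lemma sign_mul_self (a : ZMod 2) : sign a * sign a = 1 := by
  unfold sign; split_ifs <;> norm_num

lemma sign_eq_one_sub_two_mul (a : ZMod 2) : sign a = 1 - 2 * if a ≠ 0 then 1 else 0 := by
  rcases eq_zero_or_eq_one a with rfl | rfl <;> norm_num [sign]

lemma sum_sign_mul (a : ZMod 2) : ∑ z : ZMod 2, sign (a * z) = if a = 0 then 2 else 0 := by
  rw [show (Finset.univ : Finset (ZMod 2)) = {0, 1} by decide, Finset.sum_pair (by decide)]
  rcases eq_zero_or_eq_one a with rfl | rfl <;> norm_num +decide [sign]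

variable {ι : Type*} [Fintype ι]

/-- The character `x ↦ (-1) ^ ⟨S, x⟩` of `ι → ZMod 2`. -/
noncomputable def chi (S x : ι → ZMod 2) : ℝ := ∏ i, sign (S i * x i)

lemma chi_comm (S x : ι → ZMod 2) : chi S x = chi x S := by
  simp only [chi, mul_comm]

lemma chi_add_right (S x y : ι → ZMod 2) : chi S (x + y) = chi S x * chi S y := by
  simp only [chi, ← Finset.prod_mul_distrib, Pi.add_apply, mul_add, sign_add]

@[simp]
lemma chi_zero_left (x : ι → ZMod 2) : chi 0 x = 1 := by
  simp [chi, sign]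

lemma chi_mul_self (S x : ι → ZMod 2) : chi S x * chi S x = 1 := by
  simp only [chi, ← Finset.prod_mul_distrib, sign_mul_self, Finset.prod_const_one]

lemma chi_single [DecidableEq ι] (S : ι → ZMod 2) (i : ι) :
    chi S (Pi.single i 1) = sign (S i) := by
  rw [chi, Finset.prod_eq_single i (fun j _ hj => by simp [Pi.single_eq_of_ne hj, sign])
    (fun h => absurd (Finset.mem_univ i) h), Pi.single_eq_same, mul_one]

lemma sum_chi [DecidableEq ι] (S : ι → ZMod 2) :
    ∑ x, chi S x = if S = 0 then 2 ^ Fintype.card ι else 0 := by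
  simp only [chi]
  rw [← Fintype.prod_sum fun i z => sign (S i * z)]
  simp only [sum_sign_mul, Finset.prod_ite_zero, Finset.mem_univ, true_implies, Finset.prod_const,
    Finset.card_univ, funext_iff, Pi.zero_apply]

lemma sum_chi_mul_chi [DecidableEq ι] (x y : ι → ZMod 2) :
    ∑ S, chi S x * chi S y = if x = y then 2 ^ Fintype.card ι else 0 := by
  have hxy : x + y = 0 ↔ x = y := by rw [add_eq_zero_iff_eq_neg, ZModModule.neg_eq_self]
  simp only [← chi_add_right, chi_comm _ (x + y), sum_chi, hxy]

lemma sum_vecMulVec_chi [DecidableEq ι] :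
    ∑ S : ι → ZMod 2, vecMulVec (chi S) (chi S) = (2 ^ Fintype.card ι : ℝ) • 1 := by
  ext x y
  simp only [Matrix.sum_apply, vecMulVec_apply, sum_chi_mul_chi, Matrix.smul_apply,
    Matrix.one_apply, smul_eq_mul, mul_ite, mul_one, mul_zero]

lemma sum_sign (S : ι → ZMod 2) : ∑ i, sign (S i) = Fintype.card ι - 2 * hammingNorm S := by
  simp only [sign_eq_one_sub_two_mul, Finset.sum_sub_distrib, ← Finset.mul_sum, Finset.sum_boole,
    Finset.sum_const, Finset.card_univ, nsmul_eq_mul, mul_one, hammingNorm]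

lemma hammingNorm_eq_one_iff [DecidableEq ι] (v : ι → ZMod 2) :
    hammingNorm v = 1 ↔ ∃ i, v = Pi.single i 1 := by
  have h01 : ∀ a : ZMod 2, a ≠ 0 ↔ a = 1 := by decide
  simp only [hammingNorm, Finset.card_eq_one, Finset.eq_singleton_iff_unique_mem,
    Finset.mem_filter, Finset.mem_univ, true_and, funext_iff, Pi.single_apply]
  refine exists_congr fun i => ⟨fun ⟨hi, hj⟩ j => ?_, fun h => ⟨?_, fun j hj => ?_⟩⟩
  · split_ifs with hji
    · exact (h01 _).1 (hji ▸ hi)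
    · by_contra hj0; exact hji (hj j hj0)
  · simp [h i]
  · by_contra hji; simp [h j, hji] at hj

lemma sum_hammingNorm [DecidableEq ι] (f : ℕ → ℝ) :
    ∑ S : ι → ZMod 2, f (hammingNorm S) =
      ∑ k ∈ Finset.range (Fintype.card ι + 1), (Fintype.card ι).choose k * f k := by
  have h01 : ∀ a : ZMod 2, a ≠ 0 ↔ a = 1 := by decide
  have hsupp : ∑ S : ι → ZMod 2, f (hammingNorm S) = ∑ A : Finset ι, f A.card :=
    Finset.sum_nbij' (fun S => ({i | S i ≠ 0} : Finset ι)) (fun A i => if i ∈ A then 1 else 0)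
      (by simp) (by simp)
      (fun S _ => funext fun i => by by_cases h : S i = 0 <;> simp [h, (h01 _).1])
      (fun A _ => by ext i; by_cases h : i ∈ A <;> simp [h])
      (fun S _ => rfl)
  rw [hsupp, ← Finset.powerset_univ, Finset.sum_powerset_apply_card, Finset.card_univ]
  simp only [nsmul_eq_mul]

variable {n : ℕ}

lemma hypercubeGraph_adj_iff (x y : Fin n → ZMod 2) :
    (hypercubeGraph n).Adj x y ↔ ∃ i, y = x + Pi.single i 1 := by
  change hammingDist x y = 1 ↔ _
  rw [hammingDist_eq_hammingNorm, hammingNorm_eq_one_iff]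
  exact exists_congr fun i => neg_add_eq_iff_eq_add

lemma add_single_one_injective (x : Fin n → ZMod 2) :
    Function.Injective fun i => x + Pi.single i 1 := fun i j h => by
  simpa [Pi.single_apply, eq_comm] using congrFun (add_left_cancel h) j

lemma neighborFinset_eq (x : Fin n → ZMod 2) :
    (hypercubeGraph n).neighborFinset x = Finset.univ.image fun i => x + Pi.single i 1 := by
  ext y
  simp [hypercubeGraph_adj_iff, eq_comm]

lemma degree_eq (x : Fin n → ZMod 2) : (hypercubeGraph n).degree x = n := by
  rw [← card_neighborFinset_eq_degree, neighborFinset_eq,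
    Finset.card_image_of_injective _ (add_single_one_injective x), Finset.card_univ,
    Fintype.card_fin]

lemma lapMatrix_mulVec_chi (S : Fin n → ZMod 2) :
    (hypercubeGraph n).lapMatrix ℝ *ᵥ chi S = (2 * hammingNorm S : ℝ) • chi S := by
  ext x
  rw [lapMatrix_mulVec_apply, degree_eq, neighborFinset_eq,
    Finset.sum_image fun i _ j _ h => add_single_one_injective x h]
  simp only [chi_add_right, chi_single, ← Finset.mul_sum, sum_sign, Fintype.card_fin,
    Pi.smul_apply, smul_eq_mul]
  ring

noncomputable def eigenvalue (S : Fin n → ZMod 2) : ℝ := if S = 0 then 1 else 2 * hammingNorm S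

lemma eigenvalue_ne_zero (S : Fin n → ZMod 2) : eigenvalue S ≠ 0 := by
  unfold eigenvalue
  split_ifs with hS
  · exact one_ne_zero
  · exact mul_ne_zero two_ne_zero (Nat.cast_ne_zero.mpr (hammingNorm_ne_zero_iff.mpr hS))

lemma augmentedLapMatrix_mulVec_chi (S : Fin n → ZMod 2) :
    (hypercubeGraph n).augmentedLapMatrix *ᵥ chi S = eigenvalue S • chi S := by
  ext x
  have hmean : ((of fun _ _ => (1 : ℝ) / Fintype.card (Fin n → ZMod 2)) *ᵥ chi S) x =
      if S = 0 then chi S x else 0 := by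
    simp only [mulVec, dotProduct, of_apply, one_div, ← Finset.mul_sum, sum_chi]
    split_ifs with hS <;> simp [hS]
  rw [augmentedLapMatrix, add_mulVec, Pi.add_apply, lapMatrix_mulVec_chi, hmean, eigenvalue]
  split_ifs with hS <;> simp [hS]


lemma augmentedLapMatrix_mul_eq_one :
    (hypercubeGraph n).augmentedLapMatrix *
      ((2 ^ n : ℝ)⁻¹ • ∑ S : Fin n → ZMod 2, (eigenvalue S)⁻¹ • vecMulVec (chi S) (chi S)) =
      1 :=
  mul_smul_sum_inv_smul_vecMulVec_eq_one augmentedLapMatrix_mulVec_chi eigenvalue_ne_zero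
    (by positivity) (by simpa using sum_vecMulVec_chi (ι := Fin n))

lemma inv_augmentedLapMatrix_apply_self (x : Fin n → ZMod 2) :
    (hypercubeGraph n).augmentedLapMatrix⁻¹ x x =
      (2 ^ n : ℝ)⁻¹ * ∑ S : Fin n → ZMod 2, (eigenvalue S)⁻¹ := by
  simp [inv_eq_right_inv augmentedLapMatrix_mul_eq_one, Matrix.sum_apply, vecMulVec_apply,
    chi_mul_self]

lemma two_mul_sum_inv_eigenvalue_sub_two :
    2 * ∑ S : Fin n → ZMod 2, (eigenvalue S)⁻¹ - 2 =
      ∑ k ∈ Finset.Icc 1 n, (1 / (k : ℝ)) * (n.choose k : ℝ) := by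
  -- This uses `(0 : ℝ)⁻¹ = 0`: the `S = 0` term of `∑ S, |S|⁻¹` and the `k = 0` term of
  -- `∑ k, C(n, k) * k⁻¹` vanish.
  have hinv : ∀ S : Fin n → ZMod 2,
      2 * (eigenvalue S)⁻¹ = (hammingNorm S : ℝ)⁻¹ + if S = 0 then 2 else 0 := fun S => by
    by_cases hS : S = 0
    · simp [hS, eigenvalue]
    · simp only [eigenvalue, if_neg hS, add_zero, mul_inv]
      ring
  have hzero : ∀ k ∈ Finset.range (n + 1), k ∉ Finset.Icc 1 n →
      (n.choose k : ℝ) * (k : ℝ)⁻¹ = 0 := fun k hk hk' => by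
    obtain rfl : k = 0 := by simp at hk hk'; omega
    simp
  rw [Finset.mul_sum, Finset.sum_congr rfl fun S _ => hinv S, Finset.sum_add_distrib,
    Finset.sum_ite_eq', if_pos (Finset.mem_univ _), add_sub_cancel_right,
    sum_hammingNorm fun k => (k : ℝ)⁻¹, Fintype.card_fin,
    ← Finset.sum_subset (fun k hk => by simp at hk ⊢; omega) hzero]
  exact Finset.sum_congr rfl fun k _ => by rw [one_div, mul_comm]

end Hypercube

/-- The hypercube graph `Q n` has constant resistance curvature `K` with
`1/K = ∑_{k=1}^{n} (1/k) · C(n,k)`. -/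
theorem hypercubeGraph_constant_curvature (n : ℕ) (hn : 1 ≤ n) :
    ∃ K : ℝ,
      resistanceMatrix (hypercubeGraph n) *ᵥ (fun _ => K) = (fun _ => 1) ∧
      1 / K = ∑ k ∈ Finset.Icc 1 n, (1 / (k : ℝ)) * (n.choose k : ℝ) := by
  set R := ∑ k ∈ Finset.Icc 1 n, (1 / (k : ℝ)) * (n.choose k : ℝ)
  have hR : 0 < R := Finset.sum_pos (fun k hk => by
      have hk := Finset.mem_Icc.mp hk
      have : 0 < (k : ℝ) := Nat.cast_pos.mpr hk.1
      have : 0 < (n.choose k : ℝ) := Nat.cast_pos.mpr (Nat.choose_pos hk.2)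
      positivity)
    ⟨1, Finset.mem_Icc.mpr ⟨le_rfl, hn⟩⟩
  refine ⟨1 / R, ?_, one_div_one_div R⟩
  rw [resistanceMatrix_mulVec_const _
    (isUnit_det_of_right_inverse Hypercube.augmentedLapMatrix_mul_eq_one)
    Hypercube.inv_augmentedLapMatrix_apply_self]
  have hrow : 2 * (Fintype.card (Fin n → ZMod 2) : ℝ) *
      ((2 ^ n)⁻¹ * ∑ S : Fin n → ZMod 2, (Hypercube.eigenvalue S)⁻¹) - 2 = R := by
    calc _ = 2 * ∑ S : Fin n → ZMod 2, (Hypercube.eigenvalue S)⁻¹ - 2 := by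
          simp [mul_assoc]
      _ = R := Hypercube.two_mul_sum_inv_eigenvalue_sub_two
  simp only [hrow, one_div_mul_cancel hR.ne']
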